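/- arXiv:math/9912202 — 7 statements merged into one kernel-verified Lean document; each statement's English description precedes it below -/
import Mathlib

section
/- Let α : ℝ → ℝ be smooth (C^∞) with |α(s)| < 1 for all s, and let A(u) = ∫₀^u α(s) ds. Define p : ℝ³ × ℝ³ → ℝ by p(x,ξ) = sqrt(ξ₁² + ξ₂² + ξ₃² + 2·α(x₂)·ξ₁·ξ₃). Fix x₁ ∈ ℝ and θ ∈ (−π/2, π/2), and define the curve x(t) = (x₁ + t·sin θ, t·cos θ, sin θ · A(t·cos θ)/cos θ) and the constant momentum ξ(t) = (sin θ, cos θ, 0). Then for every t ∈ ℝ: (i) p(x(t), ξ(t)) = 1; (ii) the curve solves Hamilton's equations for p, namely x'(t) equals the gradient of ξ ↦ p(x(t), ξ) at ξ(t), and ξ'(t) = 0 equals the negative of the gradient of x ↦ p(x, ξ(t)) at x(t). -/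
open Real

theorem grad_aux (a : ℝ) (ξ : EuclideanSpace ℝ (Fin 3))
    (hq : ξ 0 ^ 2 + ξ 1 ^ 2 + ξ 2 ^ 2 + 2 * a * ξ 0 * ξ 2 = 1) :
    HasGradientAt (fun η : EuclideanSpace ℝ (Fin 3) =>
      Real.sqrt (η 0 ^ 2 + η 1 ^ 2 + η 2 ^ 2 + 2 * a * η 0 * η 2))
      (WithLp.toLp 2 ![ξ 0 + a * ξ 2, ξ 1, ξ 2 + a * ξ 0] : EuclideanSpace ℝ (Fin 3)) ξ := by
  rw [hasGradientAt_iff_hasFDerivAt]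
  have hq1 : ξ 0 * ξ 0 + ξ 1 * ξ 1 + ξ 2 * ξ 2 + 2 * a * ξ 0 * ξ 2 = 1 := by rw [← hq]; ring
  simp only [pow_two]
  set P : Fin 3 → (EuclideanSpace ℝ (Fin 3) →L[ℝ] ℝ) := fun i => EuclideanSpace.proj i with hP
  have hproj : ∀ i, HasFDerivAt (fun η : EuclideanSpace ℝ (Fin 3) => η i) (P i) ξ :=
    fun i => by simpa using (EuclideanSpace.proj i (𝕜 := ℝ)).hasFDerivAt
  have hq' : HasFDerivAt (fun η : EuclideanSpace ℝ (Fin 3) =>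
      η 0 * η 0 + η 1 * η 1 + η 2 * η 2 + 2 * a * η 0 * η 2)
      ((2 * ξ 0) • P 0 + (2 * ξ 1) • P 1 + (2 * ξ 2) • P 2 +
        ((2 * a * ξ 2) • P 0 + (2 * a * ξ 0) • P 2)) ξ := by
    have h0 := hproj 0; have h1 := hproj 1; have h2 := hproj 2
    have := (((h0.mul h0).add (h1.mul h1)).add (h2.mul h2)).add
      (((h0.const_mul (2*a)).mul h2))
    refine this.congr_fderiv ?_
    ext v
    simp [ContinuousLinearMap.smul_apply]
    ring
  have hsq : HasDerivAt Real.sqrt (1 / (2 * Real.sqrt (ξ 0 * ξ 0 + ξ 1 * ξ 1 + ξ 2 * ξ 2 + 2 * a * ξ 0 * ξ 2))) (ξ 0 * ξ 0 + ξ 1 * ξ 1 + ξ 2 * ξ 2 + 2 * a * ξ 0 * ξ 2) := by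
    apply Real.hasDerivAt_sqrt
    rw [hq1]; norm_num
  have hcomp := hsq.comp_hasFDerivAt ξ hq'
  refine hcomp.congr_fderiv ?_
  ext v
  rw [InnerProductSpace.toDual_apply_apply]
  rw [PiLp.inner_apply]
  simp [hP, Fin.sum_univ_three, hq1, RCLike.inner_apply, ContinuousLinearMap.smul_apply,
    PiLp.proj_apply]
  ring

/-- The curves from Lemma 2.1 (odd an three-dimensional case) solve
Hamilton's equations for the symbol `p(x,ξ) = sqrt(|ξ|² + 2α(x₂)ξ₁ξ₃)`,
and the symbol equals 1 along them. -/
theorem stmt_0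
    (α : ℝ → ℝ) (hα : ContDiff ℝ (⊤ : ℕ∞) α) (hα1 : ∀ s, |α s| < 1)
    (A : ℝ → ℝ) (hA : ∀ u, A u = ∫ s in (0:ℝ)..u, α s)
    (p : EuclideanSpace ℝ (Fin 3) → EuclideanSpace ℝ (Fin 3) → ℝ)
    (hp : ∀ x ξ : EuclideanSpace ℝ (Fin 3),
      p x ξ = Real.sqrt (ξ 0 ^ 2 + ξ 1 ^ 2 + ξ 2 ^ 2 + 2 * α (x 1) * ξ 0 * ξ 2))
    (x₁ θ : ℝ) (hθ : θ ∈ Set.Ioo (-(π/2)) (π/2))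
    (x : ℝ → EuclideanSpace ℝ (Fin 3))
    (hx : ∀ t, x t = ![x₁ + t * Real.sin θ, t * Real.cos θ,
      Real.sin θ * A (t * Real.cos θ) / Real.cos θ])
    (ξ : EuclideanSpace ℝ (Fin 3))
    (hξ : ξ = ![Real.sin θ, Real.cos θ, 0]) :
    ∀ t : ℝ,
      p (x t) ξ = 1 ∧
      HasDerivAt x (gradient (fun η => p (x t) η) ξ) t ∧
      HasDerivAt (fun _ : ℝ => ξ) (-(gradient (fun y => p y ξ) (x t))) t := by
  obtain ⟨hθ1, hθ2⟩ := hθ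
  have hc : 0 < Real.cos θ := Real.cos_pos_of_mem_Ioo ⟨hθ1, hθ2⟩
  have hcne : Real.cos θ ≠ 0 := ne_of_gt hc
  have hξ0 : ξ 0 = Real.sin θ := by rw [hξ]; rfl
  have hξ1 : ξ 1 = Real.cos θ := by rw [hξ]; rfl
  have hξ2 : ξ 2 = (0:ℝ) := by rw [hξ]; rfl
  have hx1 : ∀ t : ℝ, (x t) 1 = t * Real.cos θ := fun t => by rw [hx]; rfl
  -- derivative of A
  have hA' : ∀ u : ℝ, HasDerivAt A (α u) u := by
    intro u
    have hAe : A = fun u => ∫ s in (0:ℝ)..u, α s := funext hA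
    rw [hAe]
    exact (hα.continuous.integral_hasStrictDerivAt 0 u).hasDerivAt
  intro t
  have hq : ξ 0 ^ 2 + ξ 1 ^ 2 + ξ 2 ^ 2 + 2 * α ((x t) 1) * ξ 0 * ξ 2 = 1 := by
    rw [hξ0, hξ1, hξ2]
    simp [Real.sin_sq_add_cos_sq]
  refine ⟨?_, ?_, ?_⟩
  · rw [hp, hq, Real.sqrt_one]
  · -- Hamilton in x
    have hgrad := (grad_aux (α ((x t) 1)) ξ hq)
    have hgg : gradient (fun η => p (x t) η) ξ =
        (WithLp.toLp 2 ![ξ 0 + α ((x t) 1) * ξ 2, ξ 1, ξ 2 + α ((x t) 1) * ξ 0] :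
          EuclideanSpace ℝ (Fin 3)) := by
      have : (fun η => p (x t) η) = fun η : EuclideanSpace ℝ (Fin 3) =>
          Real.sqrt (η 0 ^ 2 + η 1 ^ 2 + η 2 ^ 2 + 2 * α ((x t) 1) * η 0 * η 2) :=
        funext fun η => hp _ _
      rw [this]
      exact hgrad.gradient
    rw [hgg]
    -- coordinatewise derivative in plain pi space
    have h0 : HasDerivAt (fun t : ℝ => x₁ + t * Real.sin θ) (Real.sin θ) t := by
      simpa using ((hasDerivAt_id t).mul_const (Real.sin θ)).const_add x₁
    have h1 : HasDerivAt (fun t : ℝ => t * Real.cos θ) (Real.cos θ) t := by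
      simpa using (hasDerivAt_id t).mul_const (Real.cos θ)
    have h2 : HasDerivAt (fun t : ℝ => Real.sin θ * A (t * Real.cos θ) / Real.cos θ)
        (α (t * Real.cos θ) * Real.sin θ) t := by
      have := (((hA' (t * Real.cos θ)).comp t h1).const_mul (Real.sin θ)).div_const
        (Real.cos θ)
      refine this.congr_deriv ?_
      field_simp
    let g : ℝ → Fin 3 → ℝ := fun t i => x t i
    have hg : HasDerivAt g
        (![Real.sin θ, Real.cos θ, α (t * Real.cos θ) * Real.sin θ] : Fin 3 → ℝ) t := by
      rw [hasDerivAt_pi]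
      intro i
      fin_cases i
      · simpa [g, hx] using h0
      · simpa [g, hx] using h1
      · simpa [g, hx] using h2
    have hfinal := ((PiLp.continuousLinearEquiv 2 ℝ (fun _ : Fin 3 => ℝ)).symm :
        (Fin 3 → ℝ) →L[ℝ] EuclideanSpace ℝ (Fin 3)).hasFDerivAt.comp_hasDerivAt t hg
    have hveq : (WithLp.toLp 2 ![ξ 0 + α ((x t) 1) * ξ 2, ξ 1, ξ 2 + α ((x t) 1) * ξ 0] :
        EuclideanSpace ℝ (Fin 3)) =
        (WithLp.toLp 2 ![Real.sin θ, Real.cos θ, α (t * Real.cos θ) * Real.sin θ] :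
          EuclideanSpace ℝ (Fin 3)) := by
      rw [hξ0, hξ1, hξ2, hx1]; norm_num
    rw [hveq]
    exact hfinal
  · -- Hamilton in ξ : the function y ↦ p y ξ is constant 1
    have hconst : (fun y => p y ξ) = fun _ : EuclideanSpace ℝ (Fin 3) => (1:ℝ) := by
      funext y
      rw [hp, hξ0, hξ1, hξ2]
      simp [Real.sin_sq_add_cos_sq]
    rw [hconst, gradient_fun_const, neg_zero]
    exact hasDerivAt_const t ξ
end

section
/- Let α : ℝ → ℝ be smooth and let A(u) = ∫₀^u α(s) ds. Define Φ : ℝ × (−π/2, π/2) × ℝ → ℝ³ by Φ(x₁, θ, t) = (x₁ + t·sin θ, t·cos θ, sin θ · A(t·cos θ)/cos θ). Then Φ is differentiable and for every x₁ ∈ ℝ and t ∈ ℝ, the absolute value of the Jacobian determinant of Φ at the point (x₁, 0, t) equals |A(t)|. -/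
open Real

/-- The geodesic parametrization map
`Φ(x₁,θ,t) = (x₁ + t sin θ, t cos θ, sin θ · A(t cos θ)/cos θ)` is differentiable on
`ℝ × (−π/2, π/2) × ℝ`, and the absolute value of its Jacobian determinant at `(x₁, 0, t)`
equals `|A(t)|`, where `A` is the primitive of `α` vanishing at `0`. -/
theorem stmt_1
    (α : ℝ → ℝ) (hα : ContDiff ℝ (⊤ : ℕ∞) α)
    (A : ℝ → ℝ) (hA : ∀ u, A u = ∫ s in (0:ℝ)..u, α s)
    (Φ : (Fin 3 → ℝ) → (Fin 3 → ℝ))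
    (hΦ : ∀ v : Fin 3 → ℝ, Φ v = ![v 0 + v 2 * Real.sin (v 1), v 2 * Real.cos (v 1),
        Real.sin (v 1) * A (v 2 * Real.cos (v 1)) / Real.cos (v 1)]) :
    (∀ v : Fin 3 → ℝ, v 1 ∈ Set.Ioo (-(π/2)) (π/2) → DifferentiableAt ℝ Φ v) ∧
    ∀ x₁ t : ℝ, |(fderiv ℝ Φ ![x₁, 0, t]).det| = |A t| := by
  have hAfun : A = fun u => ∫ s in (0:ℝ)..u, α s := funext hA
  have hAd : ∀ u, HasDerivAt A (α u) u := by
    intro u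
    rw [hAfun]
    exact (hα.continuous.integral_hasStrictDerivAt 0 u).hasDerivAt
  have hΦfun : Φ = fun v => ![v 0 + v 2 * Real.sin (v 1), v 2 * Real.cos (v 1),
      Real.sin (v 1) * A (v 2 * Real.cos (v 1)) / Real.cos (v 1)] := funext hΦ
  have hdiff : ∀ v : Fin 3 → ℝ, v 1 ∈ Set.Ioo (-(π/2)) (π/2) → DifferentiableAt ℝ Φ v := by
    intro v hv
    have hcos : Real.cos (v 1) ≠ 0 := (Real.cos_pos_of_mem_Ioo hv).ne'
    rw [hΦfun]
    apply differentiableAt_pi.2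
    intro i
    have d0 : DifferentiableAt ℝ (fun v : Fin 3 → ℝ => v 0) v := (hasFDerivAt_apply 0 v).differentiableAt
    have d1 : DifferentiableAt ℝ (fun v : Fin 3 → ℝ => v 1) v := (hasFDerivAt_apply 1 v).differentiableAt
    have d2 : DifferentiableAt ℝ (fun v : Fin 3 → ℝ => v 2) v := (hasFDerivAt_apply 2 v).differentiableAt
    have dsin : DifferentiableAt ℝ (fun v : Fin 3 → ℝ => Real.sin (v 1)) v :=
      (Real.differentiable_sin _).comp v d1
    have dcos : DifferentiableAt ℝ (fun v : Fin 3 → ℝ => Real.cos (v 1)) v :=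
      (Real.differentiable_cos _).comp v d1
    have dA : DifferentiableAt ℝ (fun v : Fin 3 → ℝ => A (v 2 * Real.cos (v 1))) v :=
      ((hAd _).differentiableAt).comp v (d2.mul dcos)
    fin_cases i <;> simp only [Matrix.cons_val_zero, Matrix.cons_val_one, Matrix.head_cons,
      Matrix.cons_val_two, Matrix.tail_cons]
    · exact d0.add (d2.mul dsin)
    · exact d2.mul dcos
    · simp only [div_eq_mul_inv]
      exact (dsin.mul dA).mul (dcos.inv hcos)
  refine ⟨hdiff, fun x₁ t => ?_⟩
  set p : Fin 3 → ℝ := ![x₁, 0, t] with hp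
  have hp0 : p 0 = x₁ := rfl
  have hp1 : p 1 = 0 := rfl
  have hp2 : p 2 = t := rfl
  -- explicit derivative
  set L0 : (Fin 3 → ℝ) →L[ℝ] ℝ := ContinuousLinearMap.proj 0 + t • ContinuousLinearMap.proj 1 with hL0
  set L1 : (Fin 3 → ℝ) →L[ℝ] ℝ := ContinuousLinearMap.proj 2 with hL1
  set L2 : (Fin 3 → ℝ) →L[ℝ] ℝ := A t • ContinuousLinearMap.proj 1 with hL2
  set L : (Fin 3 → ℝ) →L[ℝ] (Fin 3 → ℝ) := ContinuousLinearMap.pi ![L0, L1, L2] with hL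
  have h1 : HasFDerivAt (fun v : Fin 3 → ℝ => v 1) (ContinuousLinearMap.proj 1 :
      (Fin 3 → ℝ) →L[ℝ] ℝ) p := hasFDerivAt_apply 1 p
  have h2 : HasFDerivAt (fun v : Fin 3 → ℝ => v 2) (ContinuousLinearMap.proj 2 :
      (Fin 3 → ℝ) →L[ℝ] ℝ) p := hasFDerivAt_apply 2 p
  have hsin : HasFDerivAt (fun v : Fin 3 → ℝ => Real.sin (v 1))
      (Real.cos (p 1) • (ContinuousLinearMap.proj 1 : (Fin 3 → ℝ) →L[ℝ] ℝ)) p :=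
    by have := (Real.hasDerivAt_sin (p 1)).comp_hasFDerivAt p h1; exact this
  have hcos : HasFDerivAt (fun v : Fin 3 → ℝ => Real.cos (v 1))
      ((-Real.sin (p 1)) • (ContinuousLinearMap.proj 1 : (Fin 3 → ℝ) →L[ℝ] ℝ)) p :=
    by have := (Real.hasDerivAt_cos (p 1)).comp_hasFDerivAt p h1; exact this
  have hmul : HasFDerivAt (fun v : Fin 3 → ℝ => v 2 * Real.cos (v 1))
      ((p 2) • ((-Real.sin (p 1)) • (ContinuousLinearMap.proj 1 : (Fin 3 → ℝ) →L[ℝ] ℝ))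
        + Real.cos (p 1) • (ContinuousLinearMap.proj 2 : (Fin 3 → ℝ) →L[ℝ] ℝ)) p :=
    h2.mul hcos
  have hAcomp : HasFDerivAt (fun v : Fin 3 → ℝ => A (v 2 * Real.cos (v 1)))
      (α (p 2 * Real.cos (p 1)) • ((p 2) • ((-Real.sin (p 1)) • (ContinuousLinearMap.proj 1 : (Fin 3 → ℝ) →L[ℝ] ℝ))
        + Real.cos (p 1) • (ContinuousLinearMap.proj 2 : (Fin 3 → ℝ) →L[ℝ] ℝ))) p :=
    (hAd (p 2 * Real.cos (p 1))).comp_hasFDerivAt p hmul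
  have hnum : HasFDerivAt (fun v : Fin 3 → ℝ => Real.sin (v 1) * A (v 2 * Real.cos (v 1)))
      (Real.sin (p 1) • (α (p 2 * Real.cos (p 1)) • ((p 2) • ((-Real.sin (p 1)) • (ContinuousLinearMap.proj 1 : (Fin 3 → ℝ) →L[ℝ] ℝ))
        + Real.cos (p 1) • (ContinuousLinearMap.proj 2 : (Fin 3 → ℝ) →L[ℝ] ℝ)))
       + A (p 2 * Real.cos (p 1)) • (Real.cos (p 1) • (ContinuousLinearMap.proj 1 : (Fin 3 → ℝ) →L[ℝ] ℝ))) p :=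
    hsin.mul hAcomp
  have hcosne : Real.cos (p 1) ≠ 0 := by rw [hp1]; simp
  have hinv : HasFDerivAt (fun v : Fin 3 → ℝ => (Real.cos (v 1))⁻¹)
      ((-(Real.cos (p 1) ^ 2)⁻¹) • ((-Real.sin (p 1)) • (ContinuousLinearMap.proj 1 : (Fin 3 → ℝ) →L[ℝ] ℝ))) p :=
    (hasDerivAt_inv hcosne).comp_hasFDerivAt p hcos
  have hcomp2 := hnum.mul hinv
  have hL2' : HasFDerivAt (fun v : Fin 3 → ℝ => Real.sin (v 1) * A (v 2 * Real.cos (v 1)) / Real.cos (v 1)) L2 p := by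
    simp only [div_eq_mul_inv]
    refine hcomp2.congr_fderiv ?_
    ext w
    simp [hL2, hp1, hp2]
  have hL0' : HasFDerivAt (fun v : Fin 3 → ℝ => v 0 + v 2 * Real.sin (v 1)) L0 p := by
    have := (hasFDerivAt_apply (𝕜 := ℝ) 0 p).add (h2.mul hsin)
    refine this.congr_fderiv ?_
    ext w
    simp [hL0, hp1, hp2]
  have hL1' : HasFDerivAt (fun v : Fin 3 → ℝ => v 2 * Real.cos (v 1)) L1 p := by
    refine hmul.congr_fderiv ?_
    ext w
    simp [hL1, hp1, hp2]
  have hΦd : HasFDerivAt Φ L p := by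
    rw [hΦfun]
    apply hasFDerivAt_pi''
    intro i
    fin_cases i <;>
      simp only [Matrix.cons_val_zero, Matrix.cons_val_one, Matrix.head_cons,
        Matrix.cons_val_two, Matrix.tail_cons, hL, ContinuousLinearMap.proj_pi]
    · exact hL0'
    · exact hL1'
    · exact hL2'
  rw [hΦd.fderiv]
  -- compute determinant
  have hdet : L.det = -A t := by
    have hb := LinearMap.det_toMatrix (Pi.basisFun ℝ (Fin 3)) (L : (Fin 3 → ℝ) →ₗ[ℝ] (Fin 3 → ℝ))
    rw [ContinuousLinearMap.det, ← hb, Matrix.det_fin_three]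
    simp [LinearMap.toMatrix_apply, hL, hL0, hL1, hL2, Pi.basisFun_apply, Pi.single_apply]
  rw [hdet, abs_neg]
end

section
/- Fix an integer k ≥ 1 and define p : ℝ³ × ℝ³ → ℝ by p(x,ξ) = sqrt(ξ₁² + ξ₂² + ξ₃² + 2·x₂^k·ξ₁·ξ₃) (defined wherever the expression under the root is positive). Fix x₁ ∈ ℝ and θ with cos θ ≠ 0, and define the curve x(t) = (x₁ + t·sin θ, t·cos θ, sin θ · cos^k θ · t^{k+1}/(k+1)) with constant momentum ξ(t) = (sin θ, cos θ, 0). Then for every t with |t cos θ|^k < 1: p(x(t), ξ(t)) = 1, x'(t) equals the gradient of ξ ↦ p(x(t), ξ) at ξ(t), and ξ'(t) = 0 equals the negative of the gradient of x ↦ p(x, ξ(t)) at x(t). -/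
open Real

/-- The real-analytic variant with `α(s) = s^k`: the explicit curves
`t ↦ (x₁ + t sin θ, t cos θ, sin θ cosᵏ θ · t^{k+1}/(k+1))`, with constant momentum
`(sin θ, cos θ, 0)`, solve Hamilton's equations for the symbol
`p(x,ξ) = sqrt(|ξ|² + 2 x₂ᵏ ξ₁ ξ₃)` and keep the symbol equal to `1`, as long as
`|t cos θ|ᵏ < 1`. -/
theorem stmt_2 (k : ℕ) (hk : 1 ≤ k)
    (p : EuclideanSpace ℝ (Fin 3) → EuclideanSpace ℝ (Fin 3) → ℝ)
    (hp : ∀ x ξ : EuclideanSpace ℝ (Fin 3),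
      p x ξ = Real.sqrt (ξ 0 ^ 2 + ξ 1 ^ 2 + ξ 2 ^ 2 + 2 * (x 1) ^ k * ξ 0 * ξ 2))
    (x₁ θ : ℝ) (hθ : Real.cos θ ≠ 0)
    (x : ℝ → EuclideanSpace ℝ (Fin 3))
    (hx : ∀ t, x t = ![x₁ + t * Real.sin θ, t * Real.cos θ,
      Real.sin θ * (Real.cos θ) ^ k * t ^ (k+1) / (k+1)])
    (ξ : EuclideanSpace ℝ (Fin 3))
    (hξ : ξ = ![Real.sin θ, Real.cos θ, 0]) :
    ∀ t : ℝ, |t * Real.cos θ| ^ k < 1 →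
      p (x t) ξ = 1 ∧
      HasDerivAt x (gradient (fun η => p (x t) η) ξ) t ∧
      HasDerivAt (fun _ : ℝ => ξ) (-(gradient (fun y => p y ξ) (x t))) t := by
  intro t ht
  set s := Real.sin θ with hs
  set c := Real.cos θ with hc
  -- p(y, ξ) = 1 for all y
  have pyt : ∀ y : EuclideanSpace ℝ (Fin 3), p y ξ = 1 := by
    intro y
    rw [hp, hξ]
    simp only [hs, hc, Matrix.cons_val_zero, Matrix.cons_val_one, Matrix.head_cons,
      Matrix.cons_val_two, Matrix.tail_cons, mul_zero, add_zero, ne_eq]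
    norm_num [Real.sin_sq_add_cos_sq]
  refine ⟨pyt (x t), ?_, ?_⟩
  · -- Hamilton's equation for x
    set a : ℝ := (t * c) ^ k with ha
    set v : EuclideanSpace ℝ (Fin 3) := WithLp.toLp 2 ![s, c, s * a] with hv
    have hx1 : (x t) 1 = t * c := by rw [hx]; rfl
    have hfun : (fun η : EuclideanSpace ℝ (Fin 3) => p (x t) η)
        = fun η => Real.sqrt (η 0 * η 0 + η 1 * η 1 + η 2 * η 2 + 2 * a * η 0 * η 2) := by
      funext η
      rw [hp, hx1, ← ha]
      ring_nf
    -- fderiv of the inner quadratic form at ξ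
    let P : Fin 3 → (EuclideanSpace ℝ (Fin 3) →L[ℝ] ℝ) := fun i => EuclideanSpace.proj i
    have h0 : HasFDerivAt (fun η : EuclideanSpace ℝ (Fin 3) => η 0) (P 0) ξ := by
      exact (P 0).hasFDerivAt
    have h1 : HasFDerivAt (fun η : EuclideanSpace ℝ (Fin 3) => η 1) (P 1) ξ := by
      exact (P 1).hasFDerivAt
    have h2 : HasFDerivAt (fun η : EuclideanSpace ℝ (Fin 3) => η 2) (P 2) ξ := by
      exact (P 2).hasFDerivAt
    have hq := (((h0.mul h0).add (h1.mul h1)).add (h2.mul h2)).add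
      ((h0.const_mul (2 * a)).mul h2)
    have hqξ : ξ 0 * ξ 0 + ξ 1 * ξ 1 + ξ 2 * ξ 2 + 2 * a * ξ 0 * ξ 2 = 1 := by
      rw [hξ]
      simp only [Matrix.cons_val_zero, Matrix.cons_val_one, Matrix.head_cons,
        Matrix.cons_val_two, Matrix.tail_cons, mul_zero, add_zero]
      rw [hs, hc, ← sq, ← sq]
      exact Real.sin_sq_add_cos_sq θ
    have hsqrt : HasDerivAt Real.sqrt (1 / (2 * Real.sqrt 1)) 1 :=
      Real.hasDerivAt_sqrt one_ne_zero
    have hF := hsqrt.comp_hasFDerivAt_of_eq ξ hq hqξ.symm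
    have hG : HasGradientAt (fun η : EuclideanSpace ℝ (Fin 3) => p (x t) η) v ξ := by
      rw [hfun, hasGradientAt_iff_hasFDerivAt]
      refine hF.congr_fderiv ?_
      refine ContinuousLinearMap.ext fun w => ?_
      simp [hξ, hv, InnerProductSpace.toDual_apply_apply, PiLp.inner_apply, RCLike.inner_apply,
        Fin.sum_univ_three, Real.sqrt_one, smul_eq_mul, P, ha]
      ring
    rw [hG.gradient]
    -- derivative of the explicit curve
    have hxfun : x = fun u : ℝ =>
        (WithLp.toLp 2 ![x₁ + u * s, u * c, s * c ^ k * u ^ (k+1) / (k+1)] : EuclideanSpace ℝ (Fin 3)) :=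
      funext fun u => by rw [← hx u]
    rw [hxfun]
    have hpi : HasDerivAt (fun u : ℝ =>
        (![x₁ + u * s, u * c, s * c ^ k * u ^ (k+1) / (k+1)] : Fin 3 → ℝ))
        (![s, c, s * a] : Fin 3 → ℝ) t := by
      rw [hasDerivAt_pi]
      intro i
      fin_cases i
      · simpa using (hasDerivAt_mul_const s).const_add x₁
      · simpa using hasDerivAt_mul_const c
      · simp only [Matrix.cons_val_two, Matrix.tail_cons, Matrix.head_cons]
        have h := ((hasDerivAt_pow (k+1) t).const_mul (s * c ^ k)).div_const ((k : ℝ) + 1)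
        refine h.congr_deriv ?_
        have hk1 : ((k : ℝ) + 1) ≠ 0 := by positivity
        rw [ha, mul_pow, Nat.add_sub_cancel]
        push_cast
        field_simp
    have hiso := (((EuclideanSpace.equiv (Fin 3) ℝ).symm :
        (Fin 3 → ℝ) ≃L[ℝ] EuclideanSpace ℝ (Fin 3)) :
        (Fin 3 → ℝ) →L[ℝ] EuclideanSpace ℝ (Fin 3)).hasFDerivAt.comp_hasDerivAt t hpi
    exact hiso
  · -- Hamilton's equation for ξ
    have hconst : (fun y : EuclideanSpace ℝ (Fin 3) => p y ξ) = fun _ => (1 : ℝ) :=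
      funext pyt
    rw [hconst, gradient_fun_const, neg_zero]
    exact hasDerivAt_const t ξ
end

section
/- Let n ≥ 3 be odd, m = (n+1)/2, α : ℝ → ℝ smooth, and A(u) = ∫₀^u α(s) ds. Define Ψ : ℝ^{m−1} × {θ ∈ ℝ^{m−1} : |θ| < 1/2} × ℝ → ℝⁿ by Ψ(x₁, …, x_{m−1}, θ, t) = (x₁ + tθ₁, …, x_{m−1} + tθ_{m−1}, t·sqrt(1−|θ|²), θ₁·A(t·sqrt(1−|θ|²))/sqrt(1−|θ|²), …, θ_{m−1}·A(t·sqrt(1−|θ|²))/sqrt(1−|θ|²)). Then for every (x₁, …, x_{m−1}) ∈ ℝ^{m−1} and t ∈ ℝ, the absolute value of the Jacobian determinant of Ψ at the point (x₁, …, x_{m−1}, 0, t) equals |A(t)|^{(n−1)/2}. -/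
open Real

set_option maxHeartbeats 1000000

/-- odd-dimensional Jacobian computation. The geodesic parametrization
`Ψ : ℝ^{m-1} × ℝ^{m-1} × ℝ → ℝⁿ` (domain encoded as `Fin n → ℝ`, with the first `m-1`
coordinates being `x`, the next `m-1` being `θ`, and the last being `t`) has Jacobian
determinant of absolute value `|A(t)|^{(n-1)/2}` at the points `(x, 0, t)`. -/
theorem stmt_4 (n m : ℕ) (hn : 3 ≤ n) (hodd : n % 2 = 1) (hm : m = (n+1)/2)
    (α : ℝ → ℝ) (hα : ContDiff ℝ (⊤ : ℕ∞) α)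
    (A : ℝ → ℝ) (hA : ∀ u, A u = ∫ s in (0:ℝ)..u, α s)
    (Ψ : (Fin n → ℝ) → (Fin n → ℝ))
    (hΨ : ∀ v : Fin n → ℝ, ∀ i : Fin n,
      Ψ v i =
        (let t : ℝ := v ⟨n - 1, by omega⟩
         let s : ℝ := Real.sqrt (1 - ∑ j : Fin (m - 1),
           (v ⟨m - 1 + (j : ℕ), by have := j.isLt; omega⟩) ^ 2)
         if h : (i : ℕ) < m - 1 then v i + t * v ⟨m - 1 + (i : ℕ), by omega⟩
         else if (i : ℕ) = m - 1 then t * s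
         else v ⟨(i : ℕ) - 1, by omega⟩ * A (t * s) / s)) :
    ∀ (xv : Fin (m - 1) → ℝ) (t : ℝ),
      |(fderiv ℝ Ψ (fun i : Fin n =>
          if h : (i : ℕ) < m - 1 then xv ⟨i, h⟩
          else if (i : ℕ) = n - 1 then t else 0)).det| = |A t| ^ ((n - 1)/2) := by
  intro xv t
  have hm2 : 2 ≤ m := by omega
  have hn2 : n = 2 * (m - 1) + 1 := by omega
  have hnn : n - 1 < n := by omega
  set v0 : Fin n → ℝ := (fun i : Fin n =>
      if h : (i : ℕ) < m - 1 then xv ⟨i, h⟩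
      else if (i : ℕ) = n - 1 then t else 0) with hv0def
  have hv0θ : ∀ p : Fin n, m - 1 ≤ (p : ℕ) → (p : ℕ) < n - 1 → v0 p = 0 := by
    intro p h1 h2
    rw [hv0def]
    simp only []
    rw [dif_neg (by omega), if_neg (by omega)]
  have hv0last : v0 ⟨n - 1, hnn⟩ = t := by
    simp only [hv0def]
    rw [dif_neg (by show ¬ n - 1 < m - 1; omega)]
    simp
  set S : (Fin n → ℝ) → ℝ := fun v =>
    Real.sqrt (1 - ∑ j : Fin (m - 1),
      (v ⟨m - 1 + (j : ℕ), by have := j.isLt; omega⟩) ^ 2) with hSdef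
  have hsum0 : ∀ v : Fin n → ℝ, (∀ p : Fin n, m - 1 ≤ (p : ℕ) → (p : ℕ) < n - 1 → v p = 0) →
      (∑ j : Fin (m - 1), (v ⟨m - 1 + (j : ℕ), by have := j.isLt; omega⟩) ^ 2) = 0 := by
    intro v hv
    refine Finset.sum_eq_zero fun j _ => ?_
    rw [hv _ (by simp) (by simp; have := j.isLt; omega)]
    ring
  have hS0 : S v0 = 1 := by
    rw [hSdef]
    simp only []
    rw [hsum0 v0 hv0θ]
    simp
  -- derivative of S at v0 is 0
  have hSd : HasFDerivAt S (0 : (Fin n → ℝ) →L[ℝ] ℝ) v0 := by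
    have hsq : ∀ j : Fin (m - 1), HasFDerivAt
        (fun v : Fin n → ℝ => (v ⟨m - 1 + (j : ℕ), by have := j.isLt; omega⟩) ^ 2)
        (0 : (Fin n → ℝ) →L[ℝ] ℝ) v0 := by
      intro j
      have h1 : HasFDerivAt (fun v : Fin n → ℝ => v ⟨m - 1 + (j : ℕ), by have := j.isLt; omega⟩)
          (ContinuousLinearMap.proj (R := ℝ) (φ := fun _ : Fin n => ℝ)
            ⟨m - 1 + (j : ℕ), by have := j.isLt; omega⟩) v0 :=
        (ContinuousLinearMap.proj (R := ℝ) (φ := fun _ : Fin n => ℝ)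
          ⟨m - 1 + (j : ℕ), by have := j.isLt; omega⟩).hasFDerivAt
      have h2 := h1.fun_mul h1
      have hz : v0 ⟨m - 1 + (j : ℕ), by have := j.isLt; omega⟩ = 0 :=
        hv0θ _ (by show m - 1 ≤ m - 1 + (j:ℕ); omega) (by show m - 1 + (j:ℕ) < n - 1; have := j.isLt; omega)
      rw [hz] at h2
      simpa [pow_two] using h2
    have hsum : HasFDerivAt (fun v : Fin n → ℝ => ∑ j : Fin (m - 1),
        (v ⟨m - 1 + (j : ℕ), by have := j.isLt; omega⟩) ^ 2)
        (0 : (Fin n → ℝ) →L[ℝ] ℝ) v0 := by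
      have := HasFDerivAt.fun_sum (fun j (_ : j ∈ Finset.univ) => hsq j)
      simpa using this
    have hin : HasFDerivAt (fun v : Fin n → ℝ => 1 - ∑ j : Fin (m - 1),
        (v ⟨m - 1 + (j : ℕ), by have := j.isLt; omega⟩) ^ 2)
        (0 : (Fin n → ℝ) →L[ℝ] ℝ) v0 := by
      have := hsum.const_sub 1
      simpa using this
    have hval : (1 - ∑ j : Fin (m - 1),
        (v0 ⟨m - 1 + (j : ℕ), by have := j.isLt; omega⟩) ^ 2) = 1 := by
      rw [hsum0 v0 hv0θ]; ring
    have hsqrt : HasDerivAt Real.sqrt (1 / (2 * Real.sqrt 1))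
        (1 - ∑ j : Fin (m - 1), (v0 ⟨m - 1 + (j : ℕ), by have := j.isLt; omega⟩) ^ 2) := by
      rw [hval]; exact Real.hasDerivAt_sqrt one_ne_zero
    have := hsqrt.comp_hasFDerivAt v0 hin
    rw [hSdef]
    simpa [Function.comp_def] using this
  -- A has derivative α
  have hAd : ∀ u, HasDerivAt A (α u) u := by
    intro u
    have hAe : A = fun u => ∫ s in (0:ℝ)..u, α s := funext hA
    rw [hAe]
    exact intervalIntegral.integral_hasDerivAt_right
      (hα.continuous.intervalIntegrable _ _)
      (hα.continuous.stronglyMeasurableAtFilter _ _)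
      hα.continuous.continuousAt
  -- the inner map w v = v last * S v
  have hw : HasFDerivAt (fun v : Fin n → ℝ => v ⟨n - 1, hnn⟩ * S v)
      (ContinuousLinearMap.proj (R := ℝ) (φ := fun _ : Fin n => ℝ) ⟨n - 1, hnn⟩) v0 := by
    have h1 : HasFDerivAt (fun v : Fin n → ℝ => v ⟨n - 1, hnn⟩)
        (ContinuousLinearMap.proj (R := ℝ) (φ := fun _ : Fin n => ℝ) ⟨n - 1, hnn⟩) v0 :=
      (ContinuousLinearMap.proj (R := ℝ) (φ := fun _ : Fin n => ℝ) ⟨n - 1, hnn⟩).hasFDerivAt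
    have := h1.fun_mul hSd
    simpa [hS0] using this
  have hwval : v0 ⟨n - 1, hnn⟩ * S v0 = t := by rw [hv0last, hS0, mul_one]
  have hnum : DifferentiableAt ℝ (fun v : Fin n → ℝ => A (v ⟨n - 1, hnn⟩ * S v)) v0 :=
    ((hAd (v0 ⟨n - 1, hnn⟩ * S v0)).differentiableAt).comp v0 hw.differentiableAt
  have hS0' : S v0 ≠ 0 := by rw [hS0]; exact one_ne_zero
  have hdiv : DifferentiableAt ℝ (fun v : Fin n → ℝ => A (v ⟨n - 1, hnn⟩ * S v) / S v) v0 :=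
    by simp only [div_eq_mul_inv]
       exact hnum.mul (hSd.differentiableAt.inv hS0')
  have hdval : A (v0 ⟨n - 1, hnn⟩ * S v0) / S v0 = A t := by rw [hwval, hS0, div_one]
  -- the candidate derivative
  set R : Fin n → ((Fin n → ℝ) →L[ℝ] ℝ) := fun i =>
    if h : (i : ℕ) < m - 1 then
      ContinuousLinearMap.proj i + t • ContinuousLinearMap.proj (R := ℝ)
        (φ := fun _ : Fin n => ℝ) (⟨m - 1 + (i : ℕ), by omega⟩ : Fin n)
    else if h2 : (i : ℕ) = m - 1 then
      ContinuousLinearMap.proj (R := ℝ) (φ := fun _ : Fin n => ℝ) (⟨n - 1, hnn⟩ : Fin n)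
    else A t • ContinuousLinearMap.proj (R := ℝ) (φ := fun _ : Fin n => ℝ)
      (⟨(i : ℕ) - 1, by have := i.isLt; omega⟩ : Fin n) with hRdef
  set L : (Fin n → ℝ) →L[ℝ] (Fin n → ℝ) := ContinuousLinearMap.pi R with hLdef
  have key : HasFDerivAt Ψ L v0 := by
    rw [hasFDerivAt_pi']
    intro i
    rw [hLdef, ContinuousLinearMap.proj_pi]
    by_cases hi : (i : ℕ) < m - 1
    · have hfun : (fun v => Ψ v i) = fun v : Fin n → ℝ =>
          v i + v ⟨n - 1, hnn⟩ * v (⟨m - 1 + (i : ℕ), by omega⟩ : Fin n) := by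
        funext v
        rw [hΨ v i]
        simp only [dif_pos hi]
      rw [hfun, hRdef]
      simp only [dif_pos hi]
      have h1 := (ContinuousLinearMap.proj (R := ℝ) (φ := fun _ : Fin n => ℝ)
        (i : Fin n)).hasFDerivAt (x := v0)
      have h2 := (ContinuousLinearMap.proj (R := ℝ) (φ := fun _ : Fin n => ℝ)
        (⟨n - 1, hnn⟩ : Fin n)).hasFDerivAt (x := v0)
      have h3 := (ContinuousLinearMap.proj (R := ℝ) (φ := fun _ : Fin n => ℝ)
        (⟨m - 1 + (i : ℕ), by omega⟩ : Fin n)).hasFDerivAt (x := v0)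
      have h4 := h1.fun_add (h2.fun_mul h3)
      have hz : v0 (⟨m - 1 + (i : ℕ), by omega⟩ : Fin n) = 0 :=
        hv0θ _ (by show m - 1 ≤ m - 1 + (i : ℕ); omega) (by show m - 1 + (i : ℕ) < n - 1; omega)
      simpa [hz, hv0last] using h4
    · by_cases hik : (i : ℕ) = m - 1
      · have hfun : (fun v => Ψ v i) = fun v : Fin n → ℝ => v ⟨n - 1, hnn⟩ * S v := by
          funext v
          rw [hΨ v i, hSdef]
          simp only [dif_neg hi, if_pos hik]
        rw [hfun, hRdef]
        simp only [dif_neg hi, dif_pos hik]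
        exact hw
      · have hfun : (fun v => Ψ v i) = fun v : Fin n → ℝ =>
            v (⟨(i : ℕ) - 1, by have := i.isLt; omega⟩ : Fin n) *
              (A (v ⟨n - 1, hnn⟩ * S v) / S v) := by
          funext v
          rw [hΨ v i, hSdef]
          simp only [dif_neg hi, if_neg hik]
          rw [mul_div_assoc]
        rw [hfun, hRdef]
        simp only [dif_neg hi, dif_neg hik]
        have h1 := (ContinuousLinearMap.proj (R := ℝ) (φ := fun _ : Fin n => ℝ)
          (⟨(i : ℕ) - 1, by have := i.isLt; omega⟩ : Fin n)).hasFDerivAt (x := v0)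
        have h4 := h1.fun_mul hdiv.hasFDerivAt
        have hz : v0 (⟨(i : ℕ) - 1, by have := i.isLt; omega⟩ : Fin n) = 0 :=
          hv0θ _ (by show m - 1 ≤ (i : ℕ) - 1; omega)
            (by show (i : ℕ) - 1 < n - 1; have := i.isLt; omega)
        simpa [hz, hv0last, hS0, mul_one, div_one] using h4
  rw [key.fderiv]
  have hex : (n - 1) / 2 = m - 1 := by omega
  rw [hex]
  set N : Matrix (Fin n) (Fin n) ℝ := Matrix.of (fun i j =>
    if (i : ℕ) < m - 1 then
      (if (j : ℕ) = (i : ℕ) then 1 else if (j : ℕ) = m - 1 + (i : ℕ) then t else 0)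
    else if (i : ℕ) = m - 1 then (if (j : ℕ) = n - 1 then (1:ℝ) else 0)
    else (if (j : ℕ) + 1 = (i : ℕ) then A t else 0)) with hNdef
  have hLN : LinearMap.toMatrix' (↑L : (Fin n → ℝ) →ₗ[ℝ] (Fin n → ℝ)) = N := by
    ext i j
    rw [LinearMap.toMatrix'_apply]
    rw [show (Pi.single j 1 : Fin n → ℝ) = fun j' => if j' = j then 1 else 0 from by
      funext j'; simp [Pi.single_apply]]
    have hRL : (↑L : (Fin n → ℝ) →ₗ[ℝ] (Fin n → ℝ)) (fun j' => if j' = j then 1 else 0) i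
        = R i (fun j' => if j' = j then 1 else 0) := rfl
    rw [hRL, hRdef, hNdef]
    by_cases hi : (i : ℕ) < m - 1
    · simp only [dif_pos hi, Matrix.of_apply, if_pos hi, ContinuousLinearMap.add_apply,
        ContinuousLinearMap.coe_smul', Pi.smul_apply, ContinuousLinearMap.proj_apply,
        smul_eq_mul]
      simp only [Fin.ext_iff, Fin.val_mk]
      split_ifs <;> first | ring1 | (exfalso; omega)
    · by_cases hik : (i : ℕ) = m - 1
      · simp only [dif_neg hi, dif_pos hik, Matrix.of_apply, if_neg hi, if_pos hik,
          ContinuousLinearMap.proj_apply]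
        simp only [Fin.ext_iff, Fin.val_mk]
        split_ifs <;> first | ring1 | (exfalso; omega)
      · simp only [dif_neg hi, dif_neg hik, Matrix.of_apply, if_neg hi, if_neg hik,
          ContinuousLinearMap.coe_smul', Pi.smul_apply, ContinuousLinearMap.proj_apply,
          smul_eq_mul]
        simp only [Fin.ext_iff, Fin.val_mk]
        split_ifs <;> first | ring1 | (exfalso; omega)
  have hdetLN : LinearMap.det (↑L : (Fin n → ℝ) →ₗ[ℝ] (Fin n → ℝ)) = N.det := by
    rw [← hLN, LinearMap.det_toMatrix']
  show |LinearMap.det (↑L : (Fin n → ℝ) →ₗ[ℝ] (Fin n → ℝ))| = |A t| ^ (m - 1)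
  rw [hdetLN]
  -- permutation
  set f : Fin n → Fin n := fun a =>
    if h1 : (a : ℕ) < m - 1 then a
    else if h2 : (a : ℕ) = n - 1 then ⟨m - 1, by omega⟩
    else ⟨(a : ℕ) + 1, by have := a.isLt; omega⟩ with hfdef
  set g : Fin n → Fin n := fun a =>
    if h1 : (a : ℕ) < m - 1 then a
    else if h2 : (a : ℕ) = m - 1 then ⟨n - 1, hnn⟩
    else ⟨(a : ℕ) - 1, by have := a.isLt; omega⟩ with hgdef
  have hf1 : ∀ a : Fin n, (a : ℕ) < m - 1 → f a = a := by
    intro a h; rw [hfdef]; simp only [dif_pos h]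
  have hf2 : ∀ a : Fin n, (a : ℕ) = n - 1 → f a = ⟨m - 1, by omega⟩ := by
    intro a h; rw [hfdef]; simp only [dif_neg (by omega : ¬ (a:ℕ) < m - 1), dif_pos h]
  have hf3 : ∀ (a : Fin n) (h : m - 1 ≤ (a : ℕ)) (h' : (a : ℕ) < n - 1),
      f a = ⟨(a : ℕ) + 1, by omega⟩ := by
    intro a h h'; rw [hfdef]
    simp only [dif_neg (by omega : ¬ (a:ℕ) < m - 1), dif_neg (by omega : ¬ (a:ℕ) = n - 1)]
  have hg1 : ∀ a : Fin n, (a : ℕ) < m - 1 → g a = a := by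
    intro a h; rw [hgdef]; simp only [dif_pos h]
  have hg2 : ∀ a : Fin n, (a : ℕ) = m - 1 → g a = ⟨n - 1, hnn⟩ := by
    intro a h; rw [hgdef]; simp only [dif_neg (by omega : ¬ (a:ℕ) < m - 1), dif_pos h]
  have hg3 : ∀ a : Fin n, m - 1 < (a : ℕ) → g a = ⟨(a : ℕ) - 1, by have := a.isLt; omega⟩ := by
    intro a h; rw [hgdef]
    simp only [dif_neg (by omega : ¬ (a:ℕ) < m - 1), dif_neg (by omega : ¬ (a:ℕ) = m - 1)]
  have hgf : Function.LeftInverse g f := by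
    intro a
    rcases lt_or_ge ((a : ℕ)) (m - 1) with h | h
    · rw [hf1 a h, hg1 a h]
    · rcases eq_or_ne ((a : ℕ)) (n - 1) with h2 | h2
      · rw [hf2 a h2, hg2 _ rfl]
        exact Fin.ext h2.symm
      · rw [hf3 a h (by have := a.isLt; omega), hg3 _ (by show m - 1 < (a:ℕ) + 1; omega)]
        exact Fin.ext (by show (a:ℕ) + 1 - 1 = (a:ℕ); omega)
  have hfg : Function.RightInverse g f := by
    intro a
    rcases lt_or_ge ((a : ℕ)) (m - 1) with h | h
    · rw [hg1 a h, hf1 a h]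
    · rcases eq_or_ne ((a : ℕ)) (m - 1) with h2 | h2
      · rw [hg2 a h2, hf2 _ rfl]
        exact Fin.ext h2.symm
      · rw [hg3 a (by omega),
          hf3 _ (by show m - 1 ≤ (a:ℕ) - 1; omega) (by show (a:ℕ) - 1 < n - 1; have := a.isLt; omega)]
        exact Fin.ext (by show (a:ℕ) - 1 + 1 = (a:ℕ); omega)
  set σ : Equiv.Perm (Fin n) := ⟨f, g, hgf, hfg⟩ with hσdef
  have hσ : ⇑σ = f := rfl
  have hBT : (N.submatrix (⇑σ) id).BlockTriangular id := by
    intro p q hpq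
    have hpq' : (q : ℕ) < (p : ℕ) := hpq
    rw [Matrix.submatrix_apply, hσ, id_eq]
    rcases lt_or_ge ((p : ℕ)) (m - 1) with h | h
    · rw [hf1 p h, hNdef]
      simp only [Matrix.of_apply]
      rw [if_pos h, if_neg (by omega), if_neg (by omega)]
    · rcases eq_or_ne ((p : ℕ)) (n - 1) with h2 | h2
      · rw [hf2 p h2, hNdef]
        simp [Fin.val_mk, show ¬ ((q:ℕ) = n - 1) by omega, show ¬ (m - 1 < m - 1) by omega]
      · rw [hf3 p h (by have := p.isLt; omega), hNdef]
        simp [Fin.val_mk, show ¬ ((p:ℕ) + 1 < m - 1) by omega,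
          show ¬ ((p:ℕ) + 1 = m - 1) by omega,
          show ¬ ((q:ℕ) + 1 = (p:ℕ) + 1) by omega, show ¬ ((q:ℕ) = (p:ℕ)) by omega]
  have hBdet : (N.submatrix (⇑σ) id).det = (A t) ^ (m - 1) := by
    rw [Matrix.det_of_upperTriangular hBT]
    have hterm : ∀ p : Fin n, (N.submatrix (⇑σ) id) p p =
        (if (p:ℕ) < m - 1 then (1:ℝ) else if (p:ℕ) < n - 1 then A t else 1) := by
      intro p
      rw [Matrix.submatrix_apply, hσ, id_eq]
      rcases lt_or_ge ((p : ℕ)) (m - 1) with h | h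
      · rw [hf1 p h, hNdef]
        simp [Matrix.of_apply, h]
      · rcases eq_or_ne ((p : ℕ)) (n - 1) with h2 | h2
        · rw [hf2 p h2, hNdef]
          simp [Matrix.of_apply, h2, show ¬ (p:ℕ) < m - 1 by omega,
            show ¬ (p:ℕ) < n - 1 by omega]
        · rw [hf3 p h (by have := p.isLt; omega), hNdef]
          simp [Matrix.of_apply, show ¬ (p:ℕ) + 1 < m - 1 by omega,
            show ¬ (p:ℕ) + 1 = m - 1 by omega, show ¬ (p:ℕ) < m - 1 by omega,
            show (p:ℕ) < n - 1 by have := p.isLt; omega]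
    rw [Finset.prod_congr rfl (fun p _ => hterm p)]
    rw [Fin.prod_univ_eq_prod_range
      (fun i => if i < m - 1 then (1:ℝ) else if i < n - 1 then A t else 1) n]
    rw [show n = (m - 1 + (m - 1)) + 1 by omega]
    rw [Finset.prod_range_succ, Finset.prod_range_add]
    have e1 : (∏ i ∈ Finset.range (m - 1),
        (if i < m - 1 then (1:ℝ) else if i < m - 1 + (m - 1) + 1 - 1 then A t else 1)) = 1 :=
      Finset.prod_eq_one fun i hi => if_pos (Finset.mem_range.mp hi)
    have e2 : (∏ i ∈ Finset.range (m - 1),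
        (if m - 1 + i < m - 1 then (1:ℝ)
         else if m - 1 + i < m - 1 + (m - 1) + 1 - 1 then A t else 1)) = (A t) ^ (m - 1) := by
      rw [Finset.prod_congr rfl (fun i hi => ?_), Finset.prod_const, Finset.card_range]
      rw [if_neg (by omega), if_pos (by have := Finset.mem_range.mp hi; omega)]
    rw [e1, e2, if_neg (by omega), if_neg (by omega)]
    ring
  have hperm := Matrix.det_permute σ N
  rw [hBdet] at hperm
  rcases Int.units_eq_one_or (Equiv.Perm.sign σ) with hs | hs <;> rw [hs] at hperm
  · rw [← abs_pow, hperm]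
    simp
  · rw [← abs_pow, hperm]
    simp
end

section
/- Let n ≥ 4 be even, α : ℝ → ℝ smooth, and A(u) = ∫₀^u α(s) ds. Define Ψ : ℝ^{n/2} × {θ ∈ ℝ^{(n−2)/2} : |θ| < 1/2} × ℝ → ℝⁿ by Ψ(x₁, …, x_{n/2}, θ, t) = (x₁ + tθ₁, …, x_{(n−2)/2} + tθ_{(n−2)/2}, x_{n/2}, t·sqrt(1−|θ|²), θ₁·A(t·sqrt(1−|θ|²))/sqrt(1−|θ|²), …, θ_{(n−2)/2}·A(t·sqrt(1−|θ|²))/sqrt(1−|θ|²)). Then for every (x₁, …, x_{n/2}) ∈ ℝ^{n/2} and t ∈ ℝ, the absolute value of the Jacobian determinant of Ψ at (x₁, …, x_{n/2}, 0, t) equals |A(t)|^{(n−2)/2}; in particular Ψ is nonsingular at such a point whenever A(t) ≠ 0. -/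
open Real Finset

namespace Stmt6Aux

variable (n m : ℕ)

noncomputable def rows (hnm : n = 2*m) (hm2 : 2 ≤ m) (t At : ℝ) (i : Fin n) :
    (Fin n → ℝ) →L[ℝ] ℝ :=
  if h : (i:ℕ) < m - 1 then
    ContinuousLinearMap.proj i + t • ContinuousLinearMap.proj ⟨m + (i:ℕ), by omega⟩
  else if (i:ℕ) = m - 1 then ContinuousLinearMap.proj i
  else if (i:ℕ) = m then ContinuousLinearMap.proj (⟨n - 1, by omega⟩ : Fin n)
  else At • ContinuousLinearMap.proj (⟨(i:ℕ) - 1, by have := i.isLt; omega⟩ : Fin n)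

noncomputable def L (hnm : n = 2*m) (hm2 : 2 ≤ m) (t At : ℝ) :
    (Fin n → ℝ) →L[ℝ] (Fin n → ℝ) :=
  ContinuousLinearMap.pi (rows n m hnm hm2 t At)

noncomputable def M (t At : ℝ) : Matrix (Fin n) (Fin n) ℝ := fun i j =>
  if (i:ℕ) < m - 1 then
    (if (i:ℕ) = (j:ℕ) then 1 else 0) + t * (if m + (i:ℕ) = (j:ℕ) then 1 else 0)
  else if (i:ℕ) = m - 1 then (if (i:ℕ) = (j:ℕ) then 1 else 0)
  else if (i:ℕ) = m then (if n - 1 = (j:ℕ) then 1 else 0)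
  else At * (if (i:ℕ) - 1 = (j:ℕ) then 1 else 0)

lemma toMatrix_L (hnm : n = 2*m) (hm2 : 2 ≤ m) (t At : ℝ) :
    LinearMap.toMatrix' (↑(L n m hnm hm2 t At) : (Fin n → ℝ) →ₗ[ℝ] (Fin n → ℝ))
      = M n m t At := by
  ext i j
  rw [LinearMap.toMatrix'_apply]
  simp only [ContinuousLinearMap.coe_coe, L, ContinuousLinearMap.pi_apply, rows, M]
  by_cases h1 : (i:ℕ) < m - 1
  · rw [dif_pos h1, if_pos h1]
    simp [Fin.ext_iff, Pi.single_apply]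
  · rw [dif_neg h1, if_neg h1]
    by_cases h2 : (i:ℕ) = m - 1
    · rw [if_pos h2, if_pos h2]
      simp [Fin.ext_iff, Pi.single_apply]
    · rw [if_neg h2, if_neg h2]
      by_cases h3 : (i:ℕ) = m
      · rw [if_pos h3, if_pos h3]
        simp [Fin.ext_iff, eq_comm, Pi.single_apply]
      · rw [if_neg h3, if_neg h3]
        simp [Fin.ext_iff, eq_comm, Pi.single_apply]

def τ (hnm : n = 2*m) (hm2 : 2 ≤ m) : Equiv.Perm (Fin n) where
  toFun i :=
    if (i:ℕ) < m then i
    else if (i:ℕ) = m then ⟨n - 1, by omega⟩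
    else ⟨(i:ℕ) - 1, by have := i.isLt; omega⟩
  invFun j :=
    if (j:ℕ) < m then j
    else if h : (j:ℕ) = n - 1 then ⟨m, by omega⟩
    else ⟨(j:ℕ) + 1, by have := j.isLt; omega⟩
  left_inv i := by
    have hi := i.isLt
    dsimp only
    by_cases h1 : (i:ℕ) < m
    · rw [if_pos h1, if_pos h1]
    · rw [if_neg h1]
      by_cases h2 : (i:ℕ) = m
      · rw [if_pos h2]
        rw [if_neg (show ¬ (n - 1 < m) by omega), dif_pos (show n - 1 = n - 1 from rfl)]
        exact Fin.ext (by simp; omega)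
      · rw [if_neg h2]
        rw [if_neg (show ¬ ((i:ℕ) - 1 < m) by omega),
          dif_neg (show ¬ ((i:ℕ) - 1 = n - 1) by omega)]
        exact Fin.ext (by simp; omega)
  right_inv j := by
    have hj := j.isLt
    dsimp only
    by_cases h1 : (j:ℕ) < m
    · rw [if_pos h1, if_pos h1]
    · rw [if_neg h1]
      by_cases h2 : (j:ℕ) = n - 1
      · rw [dif_pos h2]
        rw [if_neg (show ¬ (m < m) by omega), if_pos rfl]
        exact Fin.ext (by simp; omega)
      · rw [dif_neg h2]
        rw [if_neg (show ¬ ((j:ℕ) + 1 < m) by omega),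
          if_neg (show ¬ ((j:ℕ) + 1 = m) by omega)]
        exact Fin.ext (by simp)

lemma τ_val (hnm : n = 2*m) (hm2 : 2 ≤ m) (j : Fin n) :
    ((τ n m hnm hm2 j : Fin n) : ℕ) =
      if (j:ℕ) < m then (j:ℕ) else if (j:ℕ) = m then n - 1 else (j:ℕ) - 1 := by
  simp only [τ, Equiv.coe_fn_mk]
  split_ifs <;> rfl

end Stmt6Aux

namespace Stmt6Aux

variable (n m : ℕ)

lemma triangular (hnm : n = 2*m) (hm2 : 2 ≤ m) (t At : ℝ) :
    ((M n m t At).submatrix id (τ n m hnm hm2)).BlockTriangular id := by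
  intro i j hij
  have hlt : (j:ℕ) < (i:ℕ) := hij
  have hi := i.isLt
  have hj := j.isLt
  have hk := τ_val n m hnm hm2 j
  simp only [Matrix.submatrix_apply, id, M]
  by_cases hj1 : (j:ℕ) < m
  · rw [if_pos hj1] at hk
    split_ifs <;> first | (exfalso; omega) | ring
  · rw [if_neg hj1] at hk
    by_cases hj2 : (j:ℕ) = m
    · rw [if_pos hj2] at hk
      split_ifs <;> first | (exfalso; omega) | ring
    · rw [if_neg hj2] at hk
      split_ifs <;> first | (exfalso; omega) | ring

lemma diag (hnm : n = 2*m) (hm2 : 2 ≤ m) (t At : ℝ) (i : Fin n) :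
    (M n m t At).submatrix id (τ n m hnm hm2) i i = if m < (i:ℕ) then At else 1 := by
  have hi := i.isLt
  have hk := τ_val n m hnm hm2 i
  simp only [Matrix.submatrix_apply, id, M]
  by_cases hj1 : (i:ℕ) < m
  · rw [if_pos hj1] at hk
    split_ifs <;> first | (exfalso; omega) | ring
  · rw [if_neg hj1] at hk
    by_cases hj2 : (i:ℕ) = m
    · rw [if_pos hj2] at hk
      split_ifs <;> first | (exfalso; omega) | ring
    · rw [if_neg hj2] at hk
      split_ifs <;> first | (exfalso; omega) | ring

lemma det_M (hnm : n = 2*m) (hm2 : 2 ≤ m) (t At : ℝ) :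
    |(M n m t At).det| = |At| ^ (m - 1) ∧ (At ≠ 0 → (M n m t At).det ≠ 0) := by
  have hprod : (∏ i : Fin n, (M n m t At).submatrix id (τ n m hnm hm2) i i)
      = At ^ (m - 1) := by
    calc (∏ i : Fin n, (M n m t At).submatrix id (τ n m hnm hm2) i i)
        = ∏ i : Fin n, (if m < (i:ℕ) then At else 1) :=
          Finset.prod_congr rfl fun i _ => diag n m hnm hm2 t At i
      _ = At ^ (m - 1) := by
          rw [Finset.prod_ite, Finset.prod_const, Finset.prod_const_one, mul_one]
          congr 1
          have he : (univ.filter fun i : Fin n => m < (i:ℕ))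
              = Finset.Ioi (⟨m, by omega⟩ : Fin n) := by
            ext i; simp [Finset.mem_Ioi, Fin.lt_def]
          rw [he, Fin.card_Ioi]
          show n - 1 - m = m - 1
          omega
  have hdet1 : ((M n m t At).submatrix id (τ n m hnm hm2)).det = At ^ (m - 1) := by
    rw [Matrix.det_of_upperTriangular (triangular n m hnm hm2 t At), hprod]
  have hperm := Matrix.det_permute' (τ n m hnm hm2) (M n m t At)
  rw [hdet1] at hperm
  set ε : ℝ := ((Equiv.Perm.sign (τ n m hnm hm2) : ℤ) : ℝ) with hεdef
  have hε : ε = 1 ∨ ε = -1 := by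
    rcases Int.units_eq_one_or (Equiv.Perm.sign (τ n m hnm hm2)) with h | h <;>
      simp [hεdef, h]
  have hperm' : At ^ (m - 1) = ε * (M n m t At).det := by
    rw [hεdef]; exact_mod_cast hperm
  constructor
  · have h1 : |At ^ (m - 1)| = |ε| * |(M n m t At).det| := by rw [hperm', abs_mul]
    have hae : |ε| = 1 := by rcases hε with h | h <;> simp [h]
    rw [hae, one_mul] at h1
    rw [← h1, abs_pow]
  · intro hAt h0
    rw [h0, mul_zero] at hperm'
    exact pow_ne_zero _ hAt hperm'

lemma det_L (hnm : n = 2*m) (hm2 : 2 ≤ m) (t At : ℝ) :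
    |(L n m hnm hm2 t At).det| = |At| ^ (m - 1) ∧
      (At ≠ 0 → (L n m hnm hm2 t At).det ≠ 0) := by
  have h : (L n m hnm hm2 t At).det = (M n m t At).det := by
    rw [ContinuousLinearMap.det, ← LinearMap.det_toMatrix', toMatrix_L]
  rw [h]
  exact det_M n m hnm hm2 t At


lemma hasFDerivAt_psi (hnm : n = 2*m) (hm2 : 2 ≤ m)
    (α A : ℝ → ℝ) (hAd : ∀ u, HasDerivAt A (α u) u)
    (xv : Fin m → ℝ) (t : ℝ) :
    HasFDerivAt (fun (v : Fin n → ℝ) (i : Fin n) =>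
      (let tv : ℝ := v ⟨n - 1, by omega⟩
       let s : ℝ := Real.sqrt (1 - ∑ j : Fin (m - 1),
         (v ⟨m + (j : ℕ), by have := j.isLt; omega⟩) ^ 2)
       if h : (i : ℕ) < m - 1 then v i + tv * v ⟨m + (i : ℕ), by omega⟩
       else if (i : ℕ) = m - 1 then v ⟨m - 1, by omega⟩
       else if (i : ℕ) = m then tv * s
       else v ⟨(i : ℕ) - 1, by have := i.isLt; omega⟩ * A (tv * s) / s))
      (L n m hnm hm2 t (A t))
      (fun i : Fin n => if h : (i : ℕ) < m then xv ⟨i, h⟩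
        else if (i : ℕ) = n - 1 then t else 0) := by
  set p : Fin n → ℝ := (fun i : Fin n => if h : (i : ℕ) < m then xv ⟨i, h⟩
    else if (i : ℕ) = n - 1 then t else 0) with hpdef
  have hp0 : ∀ (jv : ℕ) (h : jv < n), m ≤ jv → jv ≠ n - 1 → p ⟨jv, h⟩ = 0 := by
    intro jv h h1 h2
    rw [hpdef]
    dsimp only
    rw [dif_neg (show ¬ (jv < m) by omega), if_neg (show ¬ (jv = n - 1) from h2)]
  have hp_t : p ⟨n - 1, by omega⟩ = t := by
    rw [hpdef]
    dsimp only
    rw [dif_neg (show ¬ (n - 1 < m) by omega), if_pos rfl]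
  have hSp : (1 - ∑ j : Fin (m - 1),
      (p ⟨m + (j : ℕ), by have := j.isLt; omega⟩) ^ 2) = 1 := by
    rw [Finset.sum_eq_zero, sub_zero]
    intro j _
    rw [hp0 (m + (j:ℕ)) (by have := j.isLt; omega) (by omega)
      (by have := j.isLt; omega)]
    norm_num
  have hsq : ∀ k : Fin n, p k = 0 →
      HasFDerivAt (fun v : Fin n → ℝ => (v k) ^ 2)
        (0 : (Fin n → ℝ) →L[ℝ] ℝ) p := by
    intro k hk
    have h2 := HasDerivAt.comp_hasFDerivAt (f := fun v : Fin n → ℝ => v k)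
      p (hasDerivAt_pow 2 (p k)) (hasFDerivAt_apply (𝕜 := ℝ) k p)
    rw [hk] at h2
    simpa [Function.comp_def] using h2
  have hS : HasFDerivAt (fun v : Fin n → ℝ => 1 - ∑ j : Fin (m - 1),
      (v ⟨m + (j : ℕ), by have := j.isLt; omega⟩) ^ 2)
      (0 : (Fin n → ℝ) →L[ℝ] ℝ) p := by
    have hsum : HasFDerivAt (fun v : Fin n → ℝ => ∑ j : Fin (m - 1),
        (v ⟨m + (j : ℕ), by have := j.isLt; omega⟩) ^ 2)
        (0 : (Fin n → ℝ) →L[ℝ] ℝ) p := by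
      have h1 : ∀ j : Fin (m-1), j ∈ Finset.univ → HasFDerivAt
          (fun v : Fin n → ℝ => (v ⟨m + (j : ℕ), by have := j.isLt; omega⟩) ^ 2)
          ((0 : (Fin n → ℝ) →L[ℝ] ℝ)) p := by
        intro j _
        exact hsq _ (hp0 (m + (j:ℕ)) (by have := j.isLt; omega) (by omega)
          (by have := j.isLt; omega))
      have := HasFDerivAt.fun_sum h1
      simpa using this
    have := hsum.const_sub (1:ℝ)
    simpa using this
  have hSne : (1 - ∑ j : Fin (m - 1),
      (p ⟨m + (j : ℕ), by have := j.isLt; omega⟩) ^ 2) ≠ 0 := by rw [hSp]; norm_num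
  have hsqrt : HasFDerivAt (fun v : Fin n → ℝ => Real.sqrt (1 - ∑ j : Fin (m - 1),
      (v ⟨m + (j : ℕ), by have := j.isLt; omega⟩) ^ 2))
      (0 : (Fin n → ℝ) →L[ℝ] ℝ) p := by
    have := hS.sqrt hSne
    simpa using this
  have hsqrtp : Real.sqrt (1 - ∑ j : Fin (m - 1),
      (p ⟨m + (j : ℕ), by have := j.isLt; omega⟩) ^ 2) = 1 := by
    rw [hSp, Real.sqrt_one]
  have hst : HasFDerivAt (fun v : Fin n → ℝ => v ⟨n - 1, by omega⟩ *
      Real.sqrt (1 - ∑ j : Fin (m - 1),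
        (v ⟨m + (j : ℕ), by have := j.isLt; omega⟩) ^ 2))
      (ContinuousLinearMap.proj (R := ℝ) (φ := fun _ : Fin n => ℝ)
        (⟨n - 1, by omega⟩ : Fin n)) p := by
    have h2 := (hasFDerivAt_apply (F' := fun _ : Fin n => ℝ) (⟨n - 1, by omega⟩ : Fin n) p).mul hsqrt
    rw [hsqrtp] at h2
    simpa [Pi.mul_def] using h2
  have hup : p ⟨n - 1, by omega⟩ * Real.sqrt (1 - ∑ j : Fin (m - 1),
      (p ⟨m + (j : ℕ), by have := j.isLt; omega⟩) ^ 2) = t := by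
    rw [hp_t, hsqrtp, mul_one]
  -- assemble componentwise
  refine hasFDerivAt_pi'.2 fun i => ?_
  rw [show ((ContinuousLinearMap.proj i).comp (L n m hnm hm2 t (A t)))
      = rows n m hnm hm2 t (A t) i from ContinuousLinearMap.proj_pi _ _]
  have hilt := i.isLt
  by_cases h1 : (i:ℕ) < m - 1
  · simp only [rows, dif_pos h1]
    have h2 := (hasFDerivAt_apply (𝕜 := ℝ) i p).add
      ((hasFDerivAt_apply (𝕜 := ℝ) (⟨n - 1, by omega⟩ : Fin n) p).mul
        (hasFDerivAt_apply (𝕜 := ℝ) (⟨m + (i:ℕ), by omega⟩ : Fin n) p))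
    rw [hp_t, hp0 (m + (i:ℕ)) (by omega) (by omega) (by omega)] at h2
    simpa [Pi.mul_def, Pi.add_def] using h2
  · by_cases h2 : (i:ℕ) = m - 1
    · simp only [rows, dif_neg h1, if_pos h2]
      have hieq : (⟨m - 1, by omega⟩ : Fin n) = i := Fin.ext h2.symm
      rw [hieq]
      exact hasFDerivAt_apply (𝕜 := ℝ) i p
    · by_cases h3 : (i:ℕ) = m
      · simp only [rows, dif_neg h1, if_neg h2, if_pos h3]
        exact hst
      · simp only [rows, dif_neg h1, if_neg h2, if_neg h3, div_eq_mul_inv]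
        have hAu : HasFDerivAt (fun v : Fin n → ℝ => A (v ⟨n - 1, by omega⟩ *
            Real.sqrt (1 - ∑ j : Fin (m - 1),
              (v ⟨m + (j : ℕ), by have := j.isLt; omega⟩) ^ 2)))
            ((α t) • ContinuousLinearMap.proj (R := ℝ) (φ := fun _ : Fin n => ℝ)
              (⟨n - 1, by omega⟩ : Fin n)) p := by
          have hc := HasDerivAt.comp_hasFDerivAt
            (f := fun v : Fin n → ℝ => v ⟨n - 1, by omega⟩ *
              Real.sqrt (1 - ∑ j : Fin (m - 1),
                (v ⟨m + (j : ℕ), by have := j.isLt; omega⟩) ^ 2))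
            p (hAd _) hst
          rw [hup] at hc
          exact hc
        have hmulA := (hasFDerivAt_apply (𝕜 := ℝ)
          (⟨(i:ℕ) - 1, by omega⟩ : Fin n) p).mul hAu
        rw [hp0 ((i:ℕ) - 1) (by omega) (by omega) (by omega), hup] at hmulA
        have hinv : HasFDerivAt (fun v : Fin n → ℝ =>
            (Real.sqrt (1 - ∑ j : Fin (m - 1),
              (v ⟨m + (j : ℕ), by have := j.isLt; omega⟩) ^ 2))⁻¹)
            (0 : (Fin n → ℝ) →L[ℝ] ℝ) p := by
          have hc := HasDerivAt.comp_hasFDerivAt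
            (f := fun v : Fin n → ℝ => Real.sqrt (1 - ∑ j : Fin (m - 1),
              (v ⟨m + (j : ℕ), by have := j.isLt; omega⟩) ^ 2))
            p (hasDerivAt_inv (by rw [hsqrtp]; norm_num)) hsqrt
          simpa [Function.comp_def] using hc
        have hfin := hmulA.mul hinv
        simpa [hp0 ((i:ℕ) - 1) (by omega) (by omega) (by omega), hsqrtp, Pi.mul_def] using hfin


end Stmt6Aux

open Real

/-- even-dimensional Jacobian computation. The geodesic parametrization
`Ψ : ℝ^{n/2} × ℝ^{(n-2)/2} × ℝ → ℝⁿ` (domain encoded as `Fin n → ℝ`, with the first `m = n/2`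
coordinates being `x`, the next `m-1` being `θ`, and the last being `t`) has Jacobian
determinant of absolute value `|A(t)|^{(n-2)/2}` at the points `(x, 0, t)`; in particular
it is nonsingular there whenever `A(t) ≠ 0`. -/
theorem stmt_6 (n m : ℕ) (hn : 4 ≤ n) (heven : n % 2 = 0) (hm : m = n/2)
    (α : ℝ → ℝ) (hα : ContDiff ℝ (⊤ : ℕ∞) α)
    (A : ℝ → ℝ) (hA : ∀ u, A u = ∫ s in (0:ℝ)..u, α s)
    (Ψ : (Fin n → ℝ) → (Fin n → ℝ))
    (hΨ : ∀ v : Fin n → ℝ, ∀ i : Fin n,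
      Ψ v i =
        (let t : ℝ := v ⟨n - 1, by omega⟩
         let s : ℝ := Real.sqrt (1 - ∑ j : Fin (m - 1),
           (v ⟨m + (j : ℕ), by have := j.isLt; omega⟩) ^ 2)
         if h : (i : ℕ) < m - 1 then v i + t * v ⟨m + (i : ℕ), by omega⟩
         else if (i : ℕ) = m - 1 then v ⟨m - 1, by omega⟩
         else if (i : ℕ) = m then t * s
         else v ⟨(i : ℕ) - 1, by omega⟩ * A (t * s) / s)) :
    ∀ (xv : Fin m → ℝ) (t : ℝ),
      |(fderiv ℝ Ψ (fun i : Fin n =>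
          if h : (i : ℕ) < m then xv ⟨i, h⟩
          else if (i : ℕ) = n - 1 then t else 0)).det| = |A t| ^ ((n - 2)/2) ∧
      (A t ≠ 0 →
        (fderiv ℝ Ψ (fun i : Fin n =>
          if h : (i : ℕ) < m then xv ⟨i, h⟩
          else if (i : ℕ) = n - 1 then t else 0)).det ≠ 0) := by
  intro xv t
  have hnm : n = 2 * m := by omega
  have hm2 : 2 ≤ m := by omega
  have hAd : ∀ u, HasDerivAt A (α u) u := by
    intro u
    have hfu : A = fun u => ∫ s in (0:ℝ)..u, α s := funext hA
    rw [hfu]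
    exact (hα.continuous.integral_hasStrictDerivAt 0 u).hasDerivAt
  have hmain := Stmt6Aux.hasFDerivAt_psi n m hnm hm2 α A hAd xv t
  have hfun : Ψ = (fun (v : Fin n → ℝ) (i : Fin n) =>
      (let tv : ℝ := v ⟨n - 1, by omega⟩
       let s : ℝ := Real.sqrt (1 - ∑ j : Fin (m - 1),
         (v ⟨m + (j : ℕ), by have := j.isLt; omega⟩) ^ 2)
       if h : (i : ℕ) < m - 1 then v i + tv * v ⟨m + (i : ℕ), by omega⟩
       else if (i : ℕ) = m - 1 then v ⟨m - 1, by omega⟩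
       else if (i : ℕ) = m then tv * s
       else v ⟨(i : ℕ) - 1, by have := i.isLt; omega⟩ * A (tv * s) / s)) :=
    funext fun v => funext fun i => hΨ v i
  have hHas : HasFDerivAt Ψ (Stmt6Aux.L n m hnm hm2 t (A t))
      (fun i : Fin n => if h : (i : ℕ) < m then xv ⟨i, h⟩
        else if (i : ℕ) = n - 1 then t else 0) := by
    rw [hfun]
    exact hmain
  rw [hHas.fderiv]
  obtain ⟨hd1, hd2⟩ := Stmt6Aux.det_L n m hnm hm2 t (A t)
  have he : (n - 2) / 2 = m - 1 := by omega
  rw [he]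
  exact ⟨hd1, hd2⟩
end

section
/- Let n ≥ 2. There is a constant c > 0, depending only on n, with the following property. Let γ₁, γ₂ be line segments in ℝⁿ of lengths L₁, L₂ ∈ (0,1], say γ_i = {p_i + s·e_i : s ∈ [0, L_i]} with e_i unit vectors, and for δ ∈ (0,1] let T^δ_{γ_i} = {y : dist(y, γ_i) ≤ δ}. Define θ(γ₁,γ₂) = dist(γ₁, γ₂) + min(‖e₁ − e₂‖, ‖e₁ + e₂‖), where dist(γ₁,γ₂) is the infimum of ‖u − v‖ over u ∈ γ₁, v ∈ γ₂. Suppose a ∈ T^δ_{γ₁} ∩ T^δ_{γ₂} and λ ∈ (0,1]. If θ(γ₁,γ₂) ≥ δ/(c·λ), then (T^δ_{γ₁} ∩ T^δ_{γ₂}) \ B(a,λ) = ∅, where B(a,λ) is the closed ball of radius λ about a. -/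
set_option maxHeartbeats 1000000

open Metric Set

/-- Auxiliary: if `α • e₁` and `β • e₂` are close (with `e₁, e₂` unit vectors),
then `e₁` is close to `±e₂` at scale `C / |α|`. -/
lemma aux_min_dir {E : Type*} [NormedAddCommGroup E] [NormedSpace ℝ E]
    (e₁ e₂ : E) (he₁ : ‖e₁‖ = 1) (he₂ : ‖e₂‖ = 1) (α β C : ℝ)
    (hα : α ≠ 0) (h : ‖α • e₁ - β • e₂‖ ≤ C) :
    min ‖e₁ - e₂‖ ‖e₁ + e₂‖ ≤ 2 * C / |α| := by
  have hαpos : 0 < |α| := abs_pos.mpr hα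
  set r := β / α with hr
  have hsm : α • (e₁ - r • e₂) = α • e₁ - β • e₂ := by
    rw [smul_sub, smul_smul]
    congr 2
    rw [hr]; field_simp
  have hnorm : |α| * ‖e₁ - r • e₂‖ = ‖α • e₁ - β • e₂‖ := by
    rw [← hsm, norm_smul, Real.norm_eq_abs]
  have hK : ‖e₁ - r • e₂‖ ≤ C / |α| := by
    rw [le_div_iff₀ hαpos, mul_comm]
    rw [hnorm]; exact h
  have hr1 : |(|r| - 1)| ≤ C / |α| := by
    have h1 := abs_norm_sub_norm_le (r • e₂) e₁
    rw [norm_smul, Real.norm_eq_abs, he₂, mul_one, he₁, norm_sub_rev] at h1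
    exact h1.trans hK
  rcases le_or_gt 0 r with hrpos | hrneg
  · have hdecomp : e₁ - e₂ = (e₁ - r • e₂) + (r - 1) • e₂ := by
      rw [sub_smul, one_smul]; abel
    have hb : ‖e₁ - e₂‖ ≤ C / |α| + C / |α| := by
      calc ‖e₁ - e₂‖ ≤ ‖e₁ - r • e₂‖ + ‖(r - 1) • e₂‖ := by
            rw [hdecomp]; exact norm_add_le _ _
        _ ≤ C / |α| + C / |α| := by
            refine add_le_add hK ?_
            rw [norm_smul, Real.norm_eq_abs, he₂, mul_one]
            have : |r - 1| = |(|r| - 1)| := by rw [abs_of_nonneg hrpos]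
            rw [this]; exact hr1
    calc min ‖e₁ - e₂‖ ‖e₁ + e₂‖ ≤ ‖e₁ - e₂‖ := min_le_left _ _
      _ ≤ C / |α| + C / |α| := hb
      _ = 2 * C / |α| := by ring
  · have hdecomp : e₁ + e₂ = (e₁ - r • e₂) + (r + 1) • e₂ := by
      rw [add_smul, one_smul]; abel
    have hb : ‖e₁ + e₂‖ ≤ C / |α| + C / |α| := by
      calc ‖e₁ + e₂‖ ≤ ‖e₁ - r • e₂‖ + ‖(r + 1) • e₂‖ := by
            rw [hdecomp]; exact norm_add_le _ _
        _ ≤ C / |α| + C / |α| := by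
            refine add_le_add hK ?_
            rw [norm_smul, Real.norm_eq_abs, he₂, mul_one]
            have : |r + 1| = |(|r| - 1)| := by
              rw [abs_of_neg hrneg, ← abs_neg]
              congr 1; ring
            rw [this]; exact hr1
    calc min ‖e₁ - e₂‖ ‖e₁ + e₂‖ ≤ ‖e₁ + e₂‖ := min_le_right _ _
      _ ≤ C / |α| + C / |α| := hb
      _ = 2 * C / |α| := by ring

/-- the Euclidean tube-separation lemma. There is a constant `c > 0`,
depending only on `n`, such that whenever two `δ`-tubes around line segments of lengths
`L₁, L₂ ∈ (0,1]` have a common point `a`, and their phase-space separation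
`θ(γ₁,γ₂) = dist(γ₁,γ₂) + min(‖e₁-e₂‖, ‖e₁+e₂‖)` is at least `δ/(cλ)`, the two tubes
intersect only inside the closed ball `B(a,λ)`. -/
theorem stmt_11 (n : ℕ) (hn : 2 ≤ n) :
    ∃ c : ℝ, 0 < c ∧
      ∀ (p₁ p₂ e₁ e₂ a : EuclideanSpace ℝ (Fin n)) (L₁ L₂ δ lam : ℝ),
        ‖e₁‖ = 1 → ‖e₂‖ = 1 →
        L₁ ∈ Set.Ioc (0:ℝ) 1 → L₂ ∈ Set.Ioc (0:ℝ) 1 →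
        δ ∈ Set.Ioc (0:ℝ) 1 → lam ∈ Set.Ioc (0:ℝ) 1 →
        ∀ γ₁ γ₂ T₁ T₂ : Set (EuclideanSpace ℝ (Fin n)),
          γ₁ = (fun s : ℝ => p₁ + s • e₁) '' Set.Icc 0 L₁ →
          γ₂ = (fun s : ℝ => p₂ + s • e₂) '' Set.Icc 0 L₂ →
          T₁ = {y | Metric.infDist y γ₁ ≤ δ} →
          T₂ = {y | Metric.infDist y γ₂ ≤ δ} →
          a ∈ T₁ ∩ T₂ →
          δ / (c * lam) ≤
            sInf {d : ℝ | ∃ u ∈ γ₁, ∃ v ∈ γ₂, d = dist u v} +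
              min ‖e₁ - e₂‖ ‖e₁ + e₂‖ →
          (T₁ ∩ T₂) \ Metric.closedBall a lam = ∅ := by
  refine ⟨1/100, by norm_num, ?_⟩
  intro p₁ p₂ e₁ e₂ a L₁ L₂ δ lam he₁ he₂ hL₁ hL₂ hδ hlam γ₁ γ₂ T₁ T₂ hγ₁ hγ₂ hT₁ hT₂ ha hsep
  obtain ⟨hδ0, hδ1⟩ := hδ
  obtain ⟨hl0, hl1⟩ := hlam
  rw [Set.eq_empty_iff_forall_notMem]
  rintro b ⟨⟨hb1, hb2⟩, hbB⟩
  rw [Metric.mem_closedBall] at hbB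
  push_neg at hbB
  -- compactness and nonemptiness of the segments
  have hc₁ : IsCompact γ₁ := by
    rw [hγ₁]; exact isCompact_Icc.image (by fun_prop)
  have hc₂ : IsCompact γ₂ := by
    rw [hγ₂]; exact isCompact_Icc.image (by fun_prop)
  have hne₁ : γ₁.Nonempty := by
    rw [hγ₁]; exact ⟨_, ⟨0, ⟨le_refl 0, hL₁.1.le⟩, rfl⟩⟩
  have hne₂ : γ₂.Nonempty := by
    rw [hγ₂]; exact ⟨_, ⟨0, ⟨le_refl 0, hL₂.1.le⟩, rfl⟩⟩
  -- nearest points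
  obtain ⟨u₁, hu₁, hu₁d⟩ := hc₁.exists_infDist_eq_dist hne₁ a
  obtain ⟨u₂, hu₂, hu₂d⟩ := hc₂.exists_infDist_eq_dist hne₂ a
  obtain ⟨v₁, hv₁, hv₁d⟩ := hc₁.exists_infDist_eq_dist hne₁ b
  obtain ⟨v₂, hv₂, hv₂d⟩ := hc₂.exists_infDist_eq_dist hne₂ b
  have hau₁ : dist a u₁ ≤ δ := by rw [← hu₁d]; simpa [hT₁] using ha.1
  have hau₂ : dist a u₂ ≤ δ := by rw [← hu₂d]; simpa [hT₂] using ha.2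
  have hbv₁ : dist b v₁ ≤ δ := by rw [← hv₁d]; simpa [hT₁] using hb1
  have hbv₂ : dist b v₂ ≤ δ := by rw [← hv₂d]; simpa [hT₂] using hb2
  -- bound the infimum distance between segments
  set S : Set ℝ := {d : ℝ | ∃ u ∈ γ₁, ∃ v ∈ γ₂, d = dist u v} with hS
  have hSbd : sInf S ≤ 2 * δ := by
    have hmem : dist u₁ u₂ ∈ S := ⟨u₁, hu₁, u₂, hu₂, rfl⟩
    have hbdd : BddBelow S := ⟨0, by rintro d ⟨u, -, v, -, rfl⟩; exact dist_nonneg⟩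
    calc sInf S ≤ dist u₁ u₂ := csInf_le hbdd hmem
      _ ≤ dist u₁ a + dist a u₂ := dist_triangle _ _ _
      _ ≤ δ + δ := add_le_add (by rw [dist_comm]; exact hau₁) hau₂
      _ = 2 * δ := by ring
  -- parametrize the four points
  rw [hγ₁] at hu₁ hv₁
  rw [hγ₂] at hu₂ hv₂
  obtain ⟨s₁, -, rfl⟩ := hu₁
  obtain ⟨s₂, -, rfl⟩ := hu₂
  obtain ⟨t₁, -, rfl⟩ := hv₁
  obtain ⟨t₂, -, rfl⟩ := hv₂
  simp only at hau₁ hau₂ hbv₁ hbv₂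
  set α := t₁ - s₁ with hαdef
  set β := t₂ - s₂ with hβdef
  -- key vector estimates
  have key₁ : ‖(b - a) - α • e₁‖ ≤ 2 * δ := by
    have hid : (b - a) - α • e₁
        = (b - (p₁ + t₁ • e₁)) - (a - (p₁ + s₁ • e₁)) := by
      rw [hαdef, sub_smul]; abel
    rw [hid]
    calc ‖(b - (p₁ + t₁ • e₁)) - (a - (p₁ + s₁ • e₁))‖
        ≤ ‖b - (p₁ + t₁ • e₁)‖ + ‖a - (p₁ + s₁ • e₁)‖ := norm_sub_le _ _
      _ = dist b (p₁ + t₁ • e₁) + dist a (p₁ + s₁ • e₁) := by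
          rw [dist_eq_norm, dist_eq_norm]
      _ ≤ δ + δ := add_le_add hbv₁ hau₁
      _ = 2 * δ := by ring
  have key₂ : ‖(b - a) - β • e₂‖ ≤ 2 * δ := by
    have hid : (b - a) - β • e₂
        = (b - (p₂ + t₂ • e₂)) - (a - (p₂ + s₂ • e₂)) := by
      rw [hβdef, sub_smul]; abel
    rw [hid]
    calc ‖(b - (p₂ + t₂ • e₂)) - (a - (p₂ + s₂ • e₂))‖
        ≤ ‖b - (p₂ + t₂ • e₂)‖ + ‖a - (p₂ + s₂ • e₂)‖ := norm_sub_le _ _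
      _ = dist b (p₂ + t₂ • e₂) + dist a (p₂ + s₂ • e₂) := by
          rw [dist_eq_norm, dist_eq_norm]
      _ ≤ δ + δ := add_le_add hbv₂ hau₂
      _ = 2 * δ := by ring
  have key : ‖α • e₁ - β • e₂‖ ≤ 4 * δ := by
    have hid : α • e₁ - β • e₂
        = ((b - a) - β • e₂) - ((b - a) - α • e₁) := by abel
    rw [hid]
    calc ‖((b - a) - β • e₂) - ((b - a) - α • e₁)‖
        ≤ ‖(b - a) - β • e₂‖ + ‖(b - a) - α • e₁‖ := norm_sub_le _ _
      _ ≤ 2 * δ + 2 * δ := add_le_add key₂ key₁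
      _ = 4 * δ := by ring
  have hαbig : dist b a - 2 * δ ≤ |α| := by
    have h1 : ‖b - a‖ ≤ ‖α • e₁‖ + ‖(b - a) - α • e₁‖ := by
      calc ‖b - a‖ = ‖α • e₁ + ((b - a) - α • e₁)‖ := by abel_nf
        _ ≤ ‖α • e₁‖ + ‖(b - a) - α • e₁‖ := norm_add_le _ _
    have h2 : ‖α • e₁‖ = |α| := by rw [norm_smul, Real.norm_eq_abs, he₁, mul_one]
    have h3 : dist b a = ‖b - a‖ := dist_eq_norm _ _
    linarith
  -- the separation hypothesis in a usable form
  have hsep' : 100 * δ / lam ≤ sInf S + min ‖e₁ - e₂‖ ‖e₁ + e₂‖ := by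
    have : δ / (1/100 * lam) = 100 * δ / lam := by
      field_simp
    rw [← this]; exact hsep
  have hmin2 : min ‖e₁ - e₂‖ ‖e₁ + e₂‖ ≤ 2 := by
    calc min ‖e₁ - e₂‖ ‖e₁ + e₂‖ ≤ ‖e₁ - e₂‖ := min_le_left _ _
      _ ≤ ‖e₁‖ + ‖e₂‖ := norm_sub_le _ _
      _ = 2 := by rw [he₁, he₂]; norm_num
  rcases lt_or_ge lam (4 * δ) with hcase | hcase
  · -- λ < 4δ : the separation hypothesis is already absurd
    have h1 : 100 * δ / lam ≤ 2 * δ + 2 := le_trans hsep' (add_le_add hSbd hmin2)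
    have h2 : 100 * δ ≤ (2 * δ + 2) * lam := (div_le_iff₀ hl0).mp h1
    nlinarith
  · -- λ ≥ 4δ : use the angle bound
    have hDα : lam / 2 ≤ |α| := by
      have : lam / 2 ≤ dist b a - 2 * δ := by linarith
      linarith
    have hαne : α ≠ 0 := by
      intro h0
      rw [h0, abs_zero] at hDα
      linarith
    have hmin : min ‖e₁ - e₂‖ ‖e₁ + e₂‖ ≤ 16 * δ / lam := by
      have h1 := aux_min_dir e₁ e₂ he₁ he₂ α β (4 * δ) hαne key
      have h2 : 2 * (4 * δ) / |α| ≤ 2 * (4 * δ) / (lam / 2) := by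
        apply div_le_div_of_nonneg_left (by linarith) (by linarith) hDα
      have h3 : 2 * (4 * δ) / (lam / 2) = 16 * δ / lam := by
        field_simp; ring
      calc min ‖e₁ - e₂‖ ‖e₁ + e₂‖ ≤ 2 * (4 * δ) / |α| := h1
        _ ≤ 2 * (4 * δ) / (lam / 2) := h2
        _ = 16 * δ / lam := h3
    have h1 : 100 * δ / lam ≤ 2 * δ + 16 * δ / lam :=
      le_trans hsep' (add_le_add hSbd hmin)
    have h2 : 100 * δ ≤ (2 * δ + 16 * δ / lam) * lam := (div_le_iff₀ hl0).mp h1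
    have h3 : (2 * δ + 16 * δ / lam) * lam = 2 * δ * lam + 16 * δ := by
      field_simp
    have h4 : 100 * δ ≤ 2 * δ * lam + 16 * δ := by linarith [h2, h3]
    nlinarith [h4, hδ0, hl1]
end

section
/- Let (X, μ) be a measure space, let E and B be measurable sets, and let T₁, …, T_N be measurable sets of finite measure. Let λ > 0 and let A, C₀ > 0 satisfy A ≥ 2·C₀. Assume: (i) μ(E ∩ T_k) ≥ A·λ·μ(T_k) for every k; (ii) μ(T_k ∩ B) ≤ C₀·λ·μ(T_k) for every k; and (iii) the sets T₁ \ B, …, T_N \ B are pairwise disjoint. Then μ(E) ≥ (A/2)·λ·Σ_{k=1}^{N} μ(T_k). -/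
/-!
Each tube keeps at least an `(A - C₀)λ ≥ (A/2)λ` fraction of itself in `E` after its part inside
the ball `B` is removed, and these tips are disjoint, so their contributions to `μ(E)` add up.
-/

open MeasureTheory
open scoped ENNReal

namespace MeasureTheory

variable {α : Type*} [MeasurableSpace α] {μ : Measure α}

theorem sub_mul_measure_le_measure_diff_inter {E T B : Set α} {a c : ℝ≥0∞} (hT : μ T ≠ ∞)
    (hET : a * μ T ≤ μ (E ∩ T)) (hTB : μ (T ∩ B) ≤ c * μ T) :
    (a - c) * μ T ≤ μ ((T \ B) ∩ E) := by
  have hsplit : μ (E ∩ T) ≤ μ ((T \ B) ∩ E) + μ (T ∩ B) := by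
    refine (measure_mono fun x (hx : x ∈ E ∩ T) => ?_).trans (measure_union_le _ _)
    by_cases hxB : x ∈ B
    exacts [Or.inr ⟨hx.2, hxB⟩, Or.inl ⟨⟨hx.2, hxB⟩, hx.1⟩]
  calc (a - c) * μ T = a * μ T - c * μ T := ENNReal.sub_mul fun _ _ => hT
    _ ≤ μ (E ∩ T) - μ (T ∩ B) := tsub_le_tsub hET hTB
    _ ≤ μ ((T \ B) ∩ E) := tsub_le_iff_right.mpr hsplit

theorem sum_measure_inter_le_of_pairwise_disjoint {ι : Type*} [Fintype ι] {t : ι → Set α}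
    (ht : ∀ i, MeasurableSet (t i)) (hd : Pairwise fun i j => Disjoint (t i) (t j)) (s : Set α) :
    ∑ i, μ (t i ∩ s) ≤ μ s := by
  simpa only [Measure.restrict_apply (ht _), Measure.restrict_apply_univ] using
    sum_measure_le_measure_univ (μ := μ.restrict s) (s := Finset.univ)
      (fun i _ => (ht i).nullMeasurableSet) fun i _ j _ hij => (hd hij).aedisjoint

end MeasureTheory

theorem ENNReal.ofReal_half_mul_le_ofReal_sub {A C₀ lam : ℝ} (hlam : 0 < lam) (hC₀ : 0 < C₀)
    (hA : 2 * C₀ ≤ A) :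
    ENNReal.ofReal (A / 2 * lam) ≤ ENNReal.ofReal (A * lam) - ENNReal.ofReal (C₀ * lam) := by
  rw [← ENNReal.ofReal_sub _ (by positivity)]
  exact ENNReal.ofReal_le_ofReal (by nlinarith)

theorem stmt_13_general {X : Type*} [MeasurableSpace X] (μ : Measure X)
    (E B : Set X) (hB : MeasurableSet B)
    (N : ℕ) (T : Fin N → Set X) (hT : ∀ k, MeasurableSet (T k))
    (hTfin : ∀ k, μ (T k) < ⊤)
    (lam A C₀ : ℝ) (hlam : 0 < lam) (hC₀ : 0 < C₀) (hA : 2 * C₀ ≤ A)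
    (h1 : ∀ k, ENNReal.ofReal (A * lam) * μ (T k) ≤ μ (E ∩ T k))
    (h2 : ∀ k, μ (T k ∩ B) ≤ ENNReal.ofReal (C₀ * lam) * μ (T k))
    (h3 : Pairwise fun k l => Disjoint (T k \ B) (T l \ B)) :
    ENNReal.ofReal (A / 2 * lam) * ∑ k, μ (T k) ≤ μ E := by
  calc ENNReal.ofReal (A / 2 * lam) * ∑ k, μ (T k)
      = ∑ k, ENNReal.ofReal (A / 2 * lam) * μ (T k) := Finset.mul_sum _ _ _
    _ ≤ ∑ k, (ENNReal.ofReal (A * lam) - ENNReal.ofReal (C₀ * lam)) * μ (T k) := by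
        gcongr
        exact ENNReal.ofReal_half_mul_le_ofReal_sub hlam hC₀ hA
    _ ≤ ∑ k, μ ((T k \ B) ∩ E) := Finset.sum_le_sum fun k _ =>
        sub_mul_measure_le_measure_diff_inter (hTfin k).ne (h1 k) (h2 k)
    _ ≤ μ E := sum_measure_inter_le_of_pairwise_disjoint (fun k => (hT k).diff hB) h3 E

/-- the abstract 'bush argument'. If each tube `T k` captures an `Aλ`-fraction
of itself inside `E`, meets `B` in at most a `C₀λ`-fraction of itself, and the tips
`T k \ B` are pairwise disjoint, then `μ(E) ≥ (A/2)λ Σ_k μ(T k)` (given `A ≥ 2C₀`). -/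
theorem stmt_13 {X : Type*} [MeasurableSpace X] (μ : Measure X)
    (E B : Set X) (hE : MeasurableSet E) (hB : MeasurableSet B)
    (N : ℕ) (T : Fin N → Set X) (hT : ∀ k, MeasurableSet (T k))
    (hTfin : ∀ k, μ (T k) < ⊤)
    (lam A C₀ : ℝ) (hlam : 0 < lam) (hC₀ : 0 < C₀) (hA : 2 * C₀ ≤ A)
    (h1 : ∀ k, ENNReal.ofReal (A * lam) * μ (T k) ≤ μ (E ∩ T k))
    (h2 : ∀ k, μ (T k ∩ B) ≤ ENNReal.ofReal (C₀ * lam) * μ (T k))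
    (h3 : Pairwise fun k l => Disjoint (T k \ B) (T l \ B)) :
    ENNReal.ofReal (A / 2 * lam) * ∑ k, μ (T k) ≤ μ E :=
  stmt_13_general μ E B hB N T hT hTfin lam A C₀ hlam hC₀ hA h1 h2 h3
end
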